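/- arXiv:1805.00748 — 3 statements merged into one kernel-verified Lean document; each statement's English description precedes it below -/
import Mathlib

section
/- For every LTL formula φ in negation normal form, every finite word w ∈ (2^Ap)^*, and every infinite word w' ∈ (2^Ap)^ω: the concatenation ww' satisfies φ if and only if w' satisfies af(φ, w). -/
/-- LTL formulas in negation normal form over atomic propositions `Ap`. -/
inductive LTL (Ap : Type) : Type
  | tt : LTL Ap
  | ff : LTL Ap
  | atom (a : Ap) : LTL Ap
  | natom (a : Ap) : LTL Ap
  | conj (φ ψ : LTL Ap) : LTL Ap
  | disj (φ ψ : LTL Ap) : LTL Ap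
  | next (φ : LTL Ap) : LTL Ap
  | fut (φ : LTL Ap) : LTL Ap
  | glob (φ : LTL Ap) : LTL Ap
  | untl (φ ψ : LTL Ap) : LTL Ap
  | wUntl (φ ψ : LTL Ap) : LTL Ap
  | strongRel (φ ψ : LTL Ap) : LTL Ap
  | rel (φ ψ : LTL Ap) : LTL Ap

variable {Ap : Type} [DecidableEq Ap]

/-- The suffix `w_i` of an infinite word. -/
def suffix (w : ℕ → Finset Ap) (i : ℕ) : ℕ → Finset Ap := fun k => w (i + k)

/-- Standard LTL satisfaction over infinite words over `2^Ap`. -/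
def Sat : (ℕ → Finset Ap) → LTL Ap → Prop
  | _, .tt => True
  | _, .ff => False
  | w, .atom a => a ∈ w 0
  | w, .natom a => a ∉ w 0
  | w, .conj φ ψ => Sat w φ ∧ Sat w ψ
  | w, .disj φ ψ => Sat w φ ∨ Sat w ψ
  | w, .next φ => Sat (suffix w 1) φ
  | w, .fut φ => ∃ k, Sat (suffix w k) φ
  | w, .glob φ => ∀ k, Sat (suffix w k) φ
  | w, .untl φ ψ => ∃ k, Sat (suffix w k) ψ ∧ ∀ j < k, Sat (suffix w j) φ
  | w, .wUntl φ ψ =>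
      (∀ k, Sat (suffix w k) φ) ∨ (∃ k, Sat (suffix w k) ψ ∧ ∀ j < k, Sat (suffix w j) φ)
  | w, .strongRel φ ψ => ∃ k, Sat (suffix w k) φ ∧ ∀ j ≤ k, Sat (suffix w j) ψ
  | w, .rel φ ψ =>
      (∀ k, Sat (suffix w k) ψ) ∨ (∃ k, Sat (suffix w k) φ ∧ ∀ j ≤ k, Sat (suffix w j) ψ)

/-- The "after" function on a single letter `ν ∈ 2^Ap`. -/
def afLetter : LTL Ap → Finset Ap → LTL Ap
  | .tt, _ => .tt
  | .ff, _ => .ff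
  | .atom a, ν => if a ∈ ν then .tt else .ff
  | .natom a, ν => if a ∈ ν then .ff else .tt
  | .conj φ ψ, ν => .conj (afLetter φ ν) (afLetter ψ ν)
  | .disj φ ψ, ν => .disj (afLetter φ ν) (afLetter ψ ν)
  | .next φ, _ => φ
  | .fut φ, ν => .disj (afLetter φ ν) (.fut φ)
  | .glob φ, ν => .conj (afLetter φ ν) (.glob φ)
  | .untl φ ψ, ν => .disj (afLetter ψ ν) (.conj (afLetter φ ν) (.untl φ ψ))
  | .wUntl φ ψ, ν => .disj (afLetter ψ ν) (.conj (afLetter φ ν) (.wUntl φ ψ))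
  | .strongRel φ ψ, ν => .conj (afLetter ψ ν) (.disj (afLetter φ ν) (.strongRel φ ψ))
  | .rel φ ψ, ν => .conj (afLetter ψ ν) (.disj (afLetter φ ν) (.rel φ ψ))

/-- The "after" function extended to finite words. -/
def af : LTL Ap → List (Finset Ap) → LTL Ap
  | φ, [] => φ
  | φ, ν :: u => af (afLetter φ ν) u

/-- The finite prefix `w_{0i} = w[0]⋯w[i-1]` of an infinite word. -/
def prefixWord (w : ℕ → Finset Ap) (i : ℕ) : List (Finset Ap) :=
  (List.range i).map w

/-- The finite infix `w_{ij} = w[i]⋯w[j-1]` of an infinite word. -/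
def infixWord (w : ℕ → Finset Ap) (i j : ℕ) : List (Finset Ap) :=
  (List.range (j - i)).map (fun k => w (i + k))

/-- Evaluation of a formula as a propositional formula, where every maximal
proper subformula (root not `∧`/`∨`) is treated as a propositional variable
whose truth value is given by the assignment `v`. -/
def propEval (v : LTL Ap → Prop) : LTL Ap → Prop
  | .tt => True
  | .ff => False
  | .conj φ ψ => propEval v φ ∧ propEval v ψ
  | .disj φ ψ => propEval v φ ∨ propEval v ψ
  | φ => v φ

/-- Propositional equivalence `φ ≡_P ψ`. -/
def propEquiv (φ ψ : LTL Ap) : Prop := ∀ v, propEval v φ ↔ propEval v ψ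

/-- The set of subformulas of a formula (including itself). -/
def subf : LTL Ap → Set (LTL Ap)
  | .tt => {LTL.tt}
  | .ff => {LTL.ff}
  | .atom a => {LTL.atom a}
  | .natom a => {LTL.natom a}
  | .conj φ ψ => insert (.conj φ ψ) (subf φ ∪ subf ψ)
  | .disj φ ψ => insert (.disj φ ψ) (subf φ ∪ subf ψ)
  | .next φ => insert (.next φ) (subf φ)
  | .fut φ => insert (.fut φ) (subf φ)
  | .glob φ => insert (.glob φ) (subf φ)
  | .untl φ ψ => insert (.untl φ ψ) (subf φ ∪ subf ψ)
  | .wUntl φ ψ => insert (.wUntl φ ψ) (subf φ ∪ subf ψ)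
  | .strongRel φ ψ => insert (.strongRel φ ψ) (subf φ ∪ subf ψ)
  | .rel φ ψ => insert (.rel φ ψ) (subf φ ∪ subf ψ)

/-- A formula is proper if its root is not a conjunction or a disjunction. -/
def isProper : LTL Ap → Prop
  | .conj _ _ => False
  | .disj _ _ => False
  | _ => True

/-- The set of proper subformulas of `φ`. -/
def properSubf (φ : LTL Ap) : Set (LTL Ap) := {ψ | ψ ∈ subf φ ∧ isProper ψ}

/-- Formulas whose root is a least-fixed-point operator (`F`, `U`, `M`). -/
def isMu : LTL Ap → Prop
  | .fut _ => True
  | .untl _ _ => True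
  | .strongRel _ _ => True
  | _ => False

/-- Formulas whose root is a greatest-fixed-point operator (`G`, `W`, `R`). -/
def isNu : LTL Ap → Prop
  | .glob _ => True
  | .wUntl _ _ => True
  | .rel _ _ => True
  | _ => False

/-- `μ(φ)`: subformulas of `φ` of the form `Fψ`, `ψ₁Uψ₂`, `ψ₁Mψ₂`. -/
def muSet (φ : LTL Ap) : Set (LTL Ap) := {ψ | ψ ∈ subf φ ∧ isMu ψ}

/-- `ν(φ)`: subformulas of `φ` of the form `Gψ`, `ψ₁Wψ₂`, `ψ₁Rψ₂`. -/
def nuSet (φ : LTL Ap) : Set (LTL Ap) := {ψ | ψ ∈ subf φ ∧ isNu ψ}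

/-- `GF_w = {ψ ∈ μ(φ) | w ⊨ GFψ}`. -/
def GFSet (φ : LTL Ap) (w : ℕ → Finset Ap) : Set (LTL Ap) :=
  {ψ | ψ ∈ muSet φ ∧ Sat w (.glob (.fut ψ))}

/-- `F_w = {ψ ∈ μ(φ) | w ⊨ Fψ}`. -/
def FSet (φ : LTL Ap) (w : ℕ → Finset Ap) : Set (LTL Ap) :=
  {ψ | ψ ∈ muSet φ ∧ Sat w (.fut ψ)}

/-- `FG_w = {ψ ∈ ν(φ) | w ⊨ FGψ}`. -/
def FGSet (φ : LTL Ap) (w : ℕ → Finset Ap) : Set (LTL Ap) :=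
  {ψ | ψ ∈ nuSet φ ∧ Sat w (.fut (.glob ψ))}

/-- `G_w = {ψ ∈ ν(φ) | w ⊨ Gψ}`. -/
def GSet (φ : LTL Ap) (w : ℕ → Finset Ap) : Set (LTL Ap) :=
  {ψ | ψ ∈ nuSet φ ∧ Sat w (.glob ψ)}

open scoped Classical in
/-- `φ[X]_ν`. -/
noncomputable def evalNu (X : Set (LTL Ap)) : LTL Ap → LTL Ap
  | .tt => .tt
  | .ff => .ff
  | .atom a => .atom a
  | .natom a => .natom a
  | .conj φ ψ => .conj (evalNu X φ) (evalNu X ψ)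
  | .disj φ ψ => .disj (evalNu X φ) (evalNu X ψ)
  | .next φ => .next (evalNu X φ)
  | .glob φ => .glob (evalNu X φ)
  | .wUntl φ ψ => .wUntl (evalNu X φ) (evalNu X ψ)
  | .rel φ ψ => .rel (evalNu X φ) (evalNu X ψ)
  | .fut φ => if LTL.fut φ ∈ X then .tt else .ff
  | .untl φ ψ => if LTL.untl φ ψ ∈ X then .wUntl (evalNu X φ) (evalNu X ψ) else .ff
  | .strongRel φ ψ => if LTL.strongRel φ ψ ∈ X then .rel (evalNu X φ) (evalNu X ψ) else .ff

open scoped Classical in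
/-- `φ[Y]_μ`. -/
noncomputable def evalMu (Y : Set (LTL Ap)) : LTL Ap → LTL Ap
  | .tt => .tt
  | .ff => .ff
  | .atom a => .atom a
  | .natom a => .natom a
  | .conj φ ψ => .conj (evalMu Y φ) (evalMu Y ψ)
  | .disj φ ψ => .disj (evalMu Y φ) (evalMu Y ψ)
  | .next φ => .next (evalMu Y φ)
  | .fut φ => .fut (evalMu Y φ)
  | .untl φ ψ => .untl (evalMu Y φ) (evalMu Y ψ)
  | .strongRel φ ψ => .strongRel (evalMu Y φ) (evalMu Y ψ)
  | .glob φ => if LTL.glob φ ∈ Y then .tt else .ff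
  | .wUntl φ ψ => if LTL.wUntl φ ψ ∈ Y then .tt else .untl (evalMu Y φ) (evalMu Y ψ)
  | .rel φ ψ => if LTL.rel φ ψ ∈ Y then .tt else .strongRel (evalMu Y φ) (evalMu Y ψ)

/-- Concatenation `u·w` of a finite word and an infinite word. -/
def wordAppend (u : List (Finset Ap)) (w : ℕ → Finset Ap) : ℕ → Finset Ap :=
  fun i => if h : i < u.length then u.get ⟨i, h⟩ else w (i - u.length)

/-- The smallest set of formulas containing `tt`, `ff` and all elements of `S`
that is closed under conjunction and disjunction. -/
inductive PosBool (S : Set (LTL Ap)) : LTL Ap → Prop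
  | tt : PosBool S .tt
  | ff : PosBool S .ff
  | base {ψ : LTL Ap} : ψ ∈ S → PosBool S ψ
  | conj {φ ψ : LTL Ap} : PosBool S φ → PosBool S ψ → PosBool S (.conj φ ψ)
  | disj {φ ψ : LTL Ap} : PosBool S φ → PosBool S ψ → PosBool S (.disj φ ψ)

/-- `Reach(φ)`: the set of `≡_P`-equivalence classes of the formulas `af(φ,u)`
over all finite words `u`. -/
def Reach (φ : LTL Ap) : Set (Set (LTL Ap)) :=
  {C | ∃ u : List (Finset Ap), C = {ψ | propEquiv ψ (af φ u)}}

/-- The fragment `μLTL`: only `tt`, `ff`, literals, `∧`, `∨`, `X`, `F`, `U`, `M`. -/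
def inMuLTL : LTL Ap → Prop
  | .tt => True
  | .ff => True
  | .atom _ => True
  | .natom _ => True
  | .conj φ ψ => inMuLTL φ ∧ inMuLTL ψ
  | .disj φ ψ => inMuLTL φ ∧ inMuLTL ψ
  | .next φ => inMuLTL φ
  | .fut φ => inMuLTL φ
  | .untl φ ψ => inMuLTL φ ∧ inMuLTL ψ
  | .strongRel φ ψ => inMuLTL φ ∧ inMuLTL ψ
  | .glob _ => False
  | .wUntl _ _ => False
  | .rel _ _ => False

/-- The fragment `νLTL`: only `tt`, `ff`, literals, `∧`, `∨`, `X`, `G`, `W`, `R`. -/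
def inNuLTL : LTL Ap → Prop
  | .tt => True
  | .ff => True
  | .atom _ => True
  | .natom _ => True
  | .conj φ ψ => inNuLTL φ ∧ inNuLTL ψ
  | .disj φ ψ => inNuLTL φ ∧ inNuLTL ψ
  | .next φ => inNuLTL φ
  | .glob φ => inNuLTL φ
  | .wUntl φ ψ => inNuLTL φ ∧ inNuLTL ψ
  | .rel φ ψ => inNuLTL φ ∧ inNuLTL ψ
  | .fut _ => False
  | .untl _ _ => False
  | .strongRel _ _ => False

section Aux

variable {Ap : Type} [DecidableEq Ap]

lemma suffix_zero (w : ℕ → Finset Ap) : suffix w 0 = w := by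
  funext k; simp [suffix]

lemma suffix_one_suffix (w : ℕ → Finset Ap) (k : ℕ) :
    suffix (suffix w 1) k = suffix w (k + 1) := by
  funext j; unfold suffix; congr 1; omega

lemma sat_iff_of_suffix_zero (w : ℕ → Finset Ap) (φ : LTL Ap) :
    Sat (suffix w 0) φ ↔ Sat w φ := by rw [suffix_zero]

lemma ex_succ (P : ℕ → Prop) : (∃ k, P k) ↔ P 0 ∨ ∃ k, P (k + 1) := by
  constructor
  · rintro ⟨(_ | k), h⟩
    · exact Or.inl h
    · exact Or.inr ⟨k, h⟩
  · rintro (h | ⟨k, h⟩)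
    · exact ⟨0, h⟩
    · exact ⟨k + 1, h⟩

lemma all_succ (P : ℕ → Prop) : (∀ k, P k) ↔ P 0 ∧ ∀ k, P (k + 1) := by
  constructor
  · intro h; exact ⟨h 0, fun k => h (k + 1)⟩
  · rintro ⟨h0, h⟩ (_ | k)
    · exact h0
    · exact h k

lemma sat_fut_unfold (w : ℕ → Finset Ap) (φ : LTL Ap) :
    Sat w (.fut φ) ↔ Sat w φ ∨ Sat (suffix w 1) (.fut φ) := by
  show (∃ k, Sat (suffix w k) φ) ↔ _
  rw [ex_succ]
  simp only [Sat, suffix_zero, suffix_one_suffix]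

lemma sat_glob_unfold (w : ℕ → Finset Ap) (φ : LTL Ap) :
    Sat w (.glob φ) ↔ Sat w φ ∧ Sat (suffix w 1) (.glob φ) := by
  show (∀ k, Sat (suffix w k) φ) ↔ _
  rw [all_succ]
  simp only [Sat, suffix_zero, suffix_one_suffix]

lemma sat_untl_unfold (w : ℕ → Finset Ap) (φ ψ : LTL Ap) :
    Sat w (.untl φ ψ) ↔ Sat w ψ ∨ (Sat w φ ∧ Sat (suffix w 1) (.untl φ ψ)) := by
  constructor
  · rintro ⟨(_ | k), hψ, hφ⟩
    · exact Or.inl (by rwa [suffix_zero] at hψ)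
    · refine Or.inr ⟨by have := hφ 0 (by omega); rwa [suffix_zero] at this, k, ?_, ?_⟩
      · rwa [suffix_one_suffix]
      · intro j hj; rw [suffix_one_suffix]; exact hφ (j + 1) (by omega)
  · rintro (h | ⟨hφ, k, hψ, h⟩)
    · exact ⟨0, by rwa [suffix_zero], fun j hj => by omega⟩
    · refine ⟨k + 1, by rwa [suffix_one_suffix] at hψ, ?_⟩
      rintro (_ | j) hj
      · rwa [suffix_zero]
      · have := h j (by omega); rwa [suffix_one_suffix] at this
  
lemma sat_wUntl_unfold (w : ℕ → Finset Ap) (φ ψ : LTL Ap) :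
    Sat w (.wUntl φ ψ) ↔ Sat w ψ ∨ (Sat w φ ∧ Sat (suffix w 1) (.wUntl φ ψ)) := by
  constructor
  · rintro (hG | ⟨(_ | k), hψ, hφ⟩)
    · refine Or.inr ⟨by have := hG 0; rwa [suffix_zero] at this, Or.inl fun k => ?_⟩
      rw [suffix_one_suffix]; exact hG (k + 1)
    · exact Or.inl (by rwa [suffix_zero] at hψ)
    · refine Or.inr ⟨by have := hφ 0 (by omega); rwa [suffix_zero] at this,
        Or.inr ⟨k, ?_, ?_⟩⟩
      · rwa [suffix_one_suffix]
      · intro j hj; rw [suffix_one_suffix]; exact hφ (j + 1) (by omega)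
  · rintro (h | ⟨hφ, (hG | ⟨k, hψ, h⟩)⟩)
    · exact Or.inr ⟨0, by rwa [suffix_zero], fun j hj => by omega⟩
    · refine Or.inl ?_
      rintro (_ | k)
      · rwa [suffix_zero]
      · have := hG k; rwa [suffix_one_suffix] at this
    · refine Or.inr ⟨k + 1, by rwa [suffix_one_suffix] at hψ, ?_⟩
      rintro (_ | j) hj
      · rwa [suffix_zero]
      · have := h j (by omega); rwa [suffix_one_suffix] at this

lemma sat_strongRel_unfold (w : ℕ → Finset Ap) (φ ψ : LTL Ap) :
    Sat w (.strongRel φ ψ) ↔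
      Sat w ψ ∧ (Sat w φ ∨ Sat (suffix w 1) (.strongRel φ ψ)) := by
  constructor
  · rintro ⟨(_ | k), hφ, hψ⟩
    · exact ⟨by have := hψ 0 (by omega); rwa [suffix_zero] at this,
        Or.inl (by rwa [suffix_zero] at hφ)⟩
    · refine ⟨by have := hψ 0 (by omega); rwa [suffix_zero] at this,
        Or.inr ⟨k, ?_, ?_⟩⟩
      · rwa [suffix_one_suffix]
      · intro j hj; rw [suffix_one_suffix]; exact hψ (j + 1) (by omega)
  · rintro ⟨hψ0, (hφ | ⟨k, hφ, h⟩)⟩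
    · refine ⟨0, by rwa [suffix_zero], ?_⟩
      rintro (_ | j) hj
      · rwa [suffix_zero]
      · omega
    · refine ⟨k + 1, by rwa [suffix_one_suffix] at hφ, ?_⟩
      rintro (_ | j) hj
      · rwa [suffix_zero]
      · have := h j (by omega); rwa [suffix_one_suffix] at this

lemma sat_rel_unfold (w : ℕ → Finset Ap) (φ ψ : LTL Ap) :
    Sat w (.rel φ ψ) ↔
      Sat w ψ ∧ (Sat w φ ∨ Sat (suffix w 1) (.rel φ ψ)) := by
  constructor
  · rintro (hG | ⟨(_ | k), hφ, hψ⟩)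
    · refine ⟨by have := hG 0; rwa [suffix_zero] at this, Or.inr (Or.inl fun k => ?_)⟩
      rw [suffix_one_suffix]; exact hG (k + 1)
    · exact ⟨by have := hψ 0 (by omega); rwa [suffix_zero] at this,
        Or.inl (by rwa [suffix_zero] at hφ)⟩
    · refine ⟨by have := hψ 0 (by omega); rwa [suffix_zero] at this,
        Or.inr (Or.inr ⟨k, ?_, ?_⟩)⟩
      · rwa [suffix_one_suffix]
      · intro j hj; rw [suffix_one_suffix]; exact hψ (j + 1) (by omega)
  · rintro ⟨hψ0, (hφ | (hG | ⟨k, hφ, h⟩))⟩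
    · refine Or.inr ⟨0, by rwa [suffix_zero], ?_⟩
      rintro (_ | j) hj
      · rwa [suffix_zero]
      · omega
    · refine Or.inl ?_
      rintro (_ | k)
      · rwa [suffix_zero]
      · have := hG k; rwa [suffix_one_suffix] at this
    · refine Or.inr ⟨k + 1, by rwa [suffix_one_suffix] at hφ, ?_⟩
      rintro (_ | j) hj
      · rwa [suffix_zero]
      · have := h j (by omega); rwa [suffix_one_suffix] at this

lemma afLetter_correct (φ : LTL Ap) :
    ∀ w : ℕ → Finset Ap, Sat w φ ↔ Sat (suffix w 1) (afLetter φ (w 0)) := by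
  induction φ with
  | tt => intro w; simp [Sat, afLetter]
  | ff => intro w; simp [Sat, afLetter]
  | atom a =>
      intro w; simp only [Sat, afLetter]
      split_ifs with h <;> simp [Sat, h]
  | natom a =>
      intro w; simp only [Sat, afLetter]
      split_ifs with h <;> simp [Sat, h]
  | conj φ ψ ihφ ihψ =>
      intro w; simp only [Sat, afLetter, ihφ w, ihψ w]
  | disj φ ψ ihφ ihψ =>
      intro w; simp only [Sat, afLetter, ihφ w, ihψ w]
  | next φ _ => intro w; simp [Sat, afLetter]
  | fut φ ih =>
      intro w; rw [sat_fut_unfold]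
      simp only [afLetter, Sat, ih w]
  | glob φ ih =>
      intro w; rw [sat_glob_unfold]
      simp only [afLetter, Sat, ih w]
  | untl φ ψ ihφ ihψ =>
      intro w; rw [sat_untl_unfold]
      simp only [afLetter, Sat, ihφ w, ihψ w]
  | wUntl φ ψ ihφ ihψ =>
      intro w; rw [sat_wUntl_unfold]
      simp only [afLetter, Sat, ihφ w, ihψ w]
  | strongRel φ ψ ihφ ihψ =>
      intro w; rw [sat_strongRel_unfold]
      simp only [afLetter, Sat, ihφ w, ihψ w]
  | rel φ ψ ihφ ihψ =>
      intro w; rw [sat_rel_unfold]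
      simp only [afLetter, Sat, ihφ w, ihψ w]

lemma wordAppend_nil (w : ℕ → Finset Ap) : wordAppend [] w = w := by
  funext i; simp [wordAppend]

lemma wordAppend_cons_zero (ν : Finset Ap) (u : List (Finset Ap)) (w : ℕ → Finset Ap) :
    wordAppend (ν :: u) w 0 = ν := by
  simp [wordAppend]

lemma suffix_wordAppend_cons (ν : Finset Ap) (u : List (Finset Ap)) (w : ℕ → Finset Ap) :
    suffix (wordAppend (ν :: u) w) 1 = wordAppend u w := by
  funext i
  simp only [suffix, wordAppend, List.length_cons]
  by_cases h : i < u.length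
  · rw [dif_pos (by omega : 1 + i < u.length + 1), dif_pos h]
    have he : (⟨1 + i, by simp only [List.length_cons]; omega⟩ : Fin (ν :: u).length) = ⟨i + 1, by simp only [List.length_cons]; omega⟩ :=
      Fin.ext (Nat.add_comm 1 i)
    rw [he]
    rfl
  · rw [dif_neg (by omega), dif_neg h]
    congr 1
    omega

end Aux

/-- `w w' ⊨ φ` iff `w' ⊨ af(φ, w)` for every finite word `w`
and infinite word `w'`. -/
theorem stmt0 {Ap : Type} [DecidableEq Ap] [Fintype Ap]
    (φ : LTL Ap) (u : List (Finset Ap)) (w' : ℕ → Finset Ap) :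
    Sat (wordAppend u w') φ ↔ Sat w' (af φ u) := by
  induction u generalizing φ with
  | nil => rw [wordAppend_nil]; rfl
  | cons ν u ih =>
      rw [afLetter_correct φ (wordAppend (ν :: u) w'), wordAppend_cons_zero,
        suffix_wordAppend_cons, ih (afLetter φ ν)]
      rfl
end

section
/- For every LTL formula φ in negation normal form and every finite word w ∈ (2^Ap)^*, the formula af(φ, w) is a positive boolean combination of proper subformulas of φ, i.e., af(φ, w) lies in the smallest set of formulas containing tt, ff, and all proper subformulas of φ that is closed under conjunction and disjunction. -/
variable {Ap : Type} [DecidableEq Ap]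

lemma self_mem_subf (φ : LTL Ap) : φ ∈ subf φ := by
  cases φ <;> simp [subf]

lemma subf_trans : ∀ φ ψ : LTL Ap, ψ ∈ subf φ → subf ψ ⊆ subf φ := by
  intro φ
  induction φ with
  | tt => intro ψ h; simp [subf] at h; subst h; simp [subf]
  | ff => intro ψ h; simp [subf] at h; subst h; simp [subf]
  | atom a => intro ψ h; simp [subf] at h; subst h; simp [subf]
  | natom a => intro ψ h; simp [subf] at h; subst h; simp [subf]
  | conj φ₁ φ₂ ih1 ih2 =>
      intro ψ h
      simp only [subf, Set.mem_insert_iff, Set.mem_union] at h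
      rcases h with h | h | h
      · subst h; exact fun x hx => hx
      · exact fun x hx => Or.inr (Or.inl (ih1 ψ h hx))
      · exact fun x hx => Or.inr (Or.inr (ih2 ψ h hx))
  | disj φ₁ φ₂ ih1 ih2 =>
      intro ψ h
      simp only [subf, Set.mem_insert_iff, Set.mem_union] at h
      rcases h with h | h | h
      · subst h; exact fun x hx => hx
      · exact fun x hx => Or.inr (Or.inl (ih1 ψ h hx))
      · exact fun x hx => Or.inr (Or.inr (ih2 ψ h hx))
  | next φ₁ ih =>
      intro ψ h
      simp only [subf, Set.mem_insert_iff] at h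
      rcases h with h | h
      · subst h; exact fun x hx => hx
      · exact fun x hx => Or.inr (ih ψ h hx)
  | fut φ₁ ih =>
      intro ψ h
      simp only [subf, Set.mem_insert_iff] at h
      rcases h with h | h
      · subst h; exact fun x hx => hx
      · exact fun x hx => Or.inr (ih ψ h hx)
  | glob φ₁ ih =>
      intro ψ h
      simp only [subf, Set.mem_insert_iff] at h
      rcases h with h | h
      · subst h; exact fun x hx => hx
      · exact fun x hx => Or.inr (ih ψ h hx)
  | untl φ₁ φ₂ ih1 ih2 =>
      intro ψ h
      simp only [subf, Set.mem_insert_iff, Set.mem_union] at h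
      rcases h with h | h | h
      · subst h; exact fun x hx => hx
      · exact fun x hx => Or.inr (Or.inl (ih1 ψ h hx))
      · exact fun x hx => Or.inr (Or.inr (ih2 ψ h hx))
  | wUntl φ₁ φ₂ ih1 ih2 =>
      intro ψ h
      simp only [subf, Set.mem_insert_iff, Set.mem_union] at h
      rcases h with h | h | h
      · subst h; exact fun x hx => hx
      · exact fun x hx => Or.inr (Or.inl (ih1 ψ h hx))
      · exact fun x hx => Or.inr (Or.inr (ih2 ψ h hx))
  | strongRel φ₁ φ₂ ih1 ih2 =>
      intro ψ h
      simp only [subf, Set.mem_insert_iff, Set.mem_union] at h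
      rcases h with h | h | h
      · subst h; exact fun x hx => hx
      · exact fun x hx => Or.inr (Or.inl (ih1 ψ h hx))
      · exact fun x hx => Or.inr (Or.inr (ih2 ψ h hx))
  | rel φ₁ φ₂ ih1 ih2 =>
      intro ψ h
      simp only [subf, Set.mem_insert_iff, Set.mem_union] at h
      rcases h with h | h | h
      · subst h; exact fun x hx => hx
      · exact fun x hx => Or.inr (Or.inl (ih1 ψ h hx))
      · exact fun x hx => Or.inr (Or.inr (ih2 ψ h hx))

/-- Any subformula of `φ` is a positive boolean combination of proper subformulas. -/
lemma posBool_of_subf (φ : LTL Ap) : ∀ χ : LTL Ap, χ ∈ subf φ → PosBool (properSubf φ) χ := by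
  intro χ
  induction χ with
  | conj χ₁ χ₂ ih1 ih2 =>
      intro h
      have h1 : χ₁ ∈ subf φ :=
        subf_trans φ _ h (by simp [subf, self_mem_subf])
      have h2 : χ₂ ∈ subf φ :=
        subf_trans φ _ h (by simp [subf, self_mem_subf])
      exact PosBool.conj (ih1 h1) (ih2 h2)
  | disj χ₁ χ₂ ih1 ih2 =>
      intro h
      have h1 : χ₁ ∈ subf φ :=
        subf_trans φ _ h (by simp [subf, self_mem_subf])
      have h2 : χ₂ ∈ subf φ :=
        subf_trans φ _ h (by simp [subf, self_mem_subf])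
      exact PosBool.disj (ih1 h1) (ih2 h2)
  | tt => intro _; exact PosBool.tt
  | ff => intro _; exact PosBool.ff
  | atom a => intro h; exact PosBool.base ⟨h, trivial⟩
  | natom a => intro h; exact PosBool.base ⟨h, trivial⟩
  | next χ _ => intro h; exact PosBool.base ⟨h, trivial⟩
  | fut χ _ => intro h; exact PosBool.base ⟨h, trivial⟩
  | glob χ _ => intro h; exact PosBool.base ⟨h, trivial⟩
  | untl χ₁ χ₂ _ _ => intro h; exact PosBool.base ⟨h, trivial⟩
  | wUntl χ₁ χ₂ _ _ => intro h; exact PosBool.base ⟨h, trivial⟩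
  | strongRel χ₁ χ₂ _ _ => intro h; exact PosBool.base ⟨h, trivial⟩
  | rel χ₁ χ₂ _ _ => intro h; exact PosBool.base ⟨h, trivial⟩

lemma posBool_afLetter (φ : LTL Ap) (ν : Finset Ap) :
    ∀ ψ : LTL Ap, PosBool (properSubf φ) ψ → PosBool (properSubf φ) (afLetter ψ ν) := by
  intro ψ
  induction ψ with
  | tt => intro _; exact PosBool.tt
  | ff => intro _; exact PosBool.ff
  | atom a =>
      intro _
      simp only [afLetter]
      split <;> [exact PosBool.tt; exact PosBool.ff]
  | natom a =>
      intro _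
      simp only [afLetter]
      split <;> [exact PosBool.ff; exact PosBool.tt]
  | conj ψ₁ ψ₂ ih1 ih2 =>
      intro h
      cases h with
      | base hb => exact absurd hb.2 (by simp [isProper])
      | conj h1 h2 => exact PosBool.conj (ih1 h1) (ih2 h2)
  | disj ψ₁ ψ₂ ih1 ih2 =>
      intro h
      cases h with
      | base hb => exact absurd hb.2 (by simp [isProper])
      | disj h1 h2 => exact PosBool.disj (ih1 h1) (ih2 h2)
  | next χ _ =>
      intro h
      cases h with
      | base hb =>
          exact posBool_of_subf φ χ
            (subf_trans φ _ hb.1 (by simp [subf, self_mem_subf]))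
  | fut χ ih =>
      intro h
      cases h with
      | base hb =>
          have hχ : PosBool (properSubf φ) χ :=
            posBool_of_subf φ χ (subf_trans φ _ hb.1 (by simp [subf, self_mem_subf]))
          exact PosBool.disj (ih hχ) (PosBool.base hb)
  | glob χ ih =>
      intro h
      cases h with
      | base hb =>
          have hχ : PosBool (properSubf φ) χ :=
            posBool_of_subf φ χ (subf_trans φ _ hb.1 (by simp [subf, self_mem_subf]))
          exact PosBool.conj (ih hχ) (PosBool.base hb)
  | untl χ₁ χ₂ ih1 ih2 =>
      intro h
      cases h with
      | base hb =>
          have h1 : PosBool (properSubf φ) χ₁ :=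
            posBool_of_subf φ χ₁ (subf_trans φ _ hb.1 (by simp [subf, self_mem_subf]))
          have h2 : PosBool (properSubf φ) χ₂ :=
            posBool_of_subf φ χ₂ (subf_trans φ _ hb.1 (by simp [subf, self_mem_subf]))
          exact PosBool.disj (ih2 h2) (PosBool.conj (ih1 h1) (PosBool.base hb))
  | wUntl χ₁ χ₂ ih1 ih2 =>
      intro h
      cases h with
      | base hb =>
          have h1 : PosBool (properSubf φ) χ₁ :=
            posBool_of_subf φ χ₁ (subf_trans φ _ hb.1 (by simp [subf, self_mem_subf]))
          have h2 : PosBool (properSubf φ) χ₂ :=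
            posBool_of_subf φ χ₂ (subf_trans φ _ hb.1 (by simp [subf, self_mem_subf]))
          exact PosBool.disj (ih2 h2) (PosBool.conj (ih1 h1) (PosBool.base hb))
  | strongRel χ₁ χ₂ ih1 ih2 =>
      intro h
      cases h with
      | base hb =>
          have h1 : PosBool (properSubf φ) χ₁ :=
            posBool_of_subf φ χ₁ (subf_trans φ _ hb.1 (by simp [subf, self_mem_subf]))
          have h2 : PosBool (properSubf φ) χ₂ :=
            posBool_of_subf φ χ₂ (subf_trans φ _ hb.1 (by simp [subf, self_mem_subf]))
          exact PosBool.conj (ih2 h2) (PosBool.disj (ih1 h1) (PosBool.base hb))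
  | rel χ₁ χ₂ ih1 ih2 =>
      intro h
      cases h with
      | base hb =>
          have h1 : PosBool (properSubf φ) χ₁ :=
            posBool_of_subf φ χ₁ (subf_trans φ _ hb.1 (by simp [subf, self_mem_subf]))
          have h2 : PosBool (properSubf φ) χ₂ :=
            posBool_of_subf φ χ₂ (subf_trans φ _ hb.1 (by simp [subf, self_mem_subf]))
          exact PosBool.conj (ih2 h2) (PosBool.disj (ih1 h1) (PosBool.base hb))

lemma posBool_af (φ : LTL Ap) (u : List (Finset Ap)) :
    ∀ ψ : LTL Ap, PosBool (properSubf φ) ψ → PosBool (properSubf φ) (af ψ u) := by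
  induction u with
  | nil => intro ψ h; exact h
  | cons ν u ih => intro ψ h; exact ih _ (posBool_afLetter φ ν ψ h)

/-- `af(φ, w)` is a positive boolean combination of proper
subformulas of `φ`. -/
theorem stmt1 {Ap : Type} [DecidableEq Ap] [Fintype Ap]
    (φ : LTL Ap) (u : List (Finset Ap)) :
    PosBool (properSubf φ) (af φ u) := by
  exact posBool_af φ u φ (posBool_of_subf φ φ (self_mem_subf φ))
end

section
/- For every formula φ of the fragment νLTL and every infinite word w over 2^Ap: w ⊨ FGφ if and only if there exists an index i such that for all indices j ≥ i, af(Gφ, w_{ij}) is not propositionally equivalent to ff. -/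
variable {Ap : Type} [DecidableEq Ap]

namespace Stmt6Aux

set_option linter.unusedSectionVars false

variable {Ap : Type} [DecidableEq Ap]

lemma af_append (u v : List (Finset Ap)) (ξ : LTL Ap) :
    af ξ (u ++ v) = af (af ξ u) v := by
  induction u generalizing ξ with
  | nil => rfl
  | cons a u ih => simpa [af] using ih (afLetter ξ a)

lemma af_conj (φ ψ : LTL Ap) (u : List (Finset Ap)) :
    af (.conj φ ψ) u = .conj (af φ u) (af ψ u) := by
  induction u generalizing φ ψ with
  | nil => rfl
  | cons a u ih => simpa [af, afLetter] using ih (afLetter φ a) (afLetter ψ a)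

lemma af_disj (φ ψ : LTL Ap) (u : List (Finset Ap)) :
    af (.disj φ ψ) u = .disj (af φ u) (af ψ u) := by
  induction u generalizing φ ψ with
  | nil => rfl
  | cons a u ih => simpa [af, afLetter] using ih (afLetter φ a) (afLetter ψ a)

lemma propEval_afLetter (v : LTL Ap → Prop) (ν : Finset Ap) :
    ∀ ξ : LTL Ap, propEval v (afLetter ξ ν) ↔
      propEval (fun χ => propEval v (afLetter χ ν)) ξ := by
  intro ξ
  induction ξ with
  | conj φ ψ ihφ ihψ => simp only [afLetter, propEval]; exact and_congr ihφ ihψ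
  | disj φ ψ ihφ ihψ => simp only [afLetter, propEval]; exact or_congr ihφ ihψ
  | _ => exact Iff.rfl

lemma equivff_conj_left {a : LTL Ap} (h : propEquiv a .ff) (b : LTL Ap) :
    propEquiv (.conj a b) .ff := by
  intro v
  simp only [propEval] at *
  exact ⟨fun hc => (h v).mp hc.1, False.elim⟩

lemma equivff_conj_right {b : LTL Ap} (h : propEquiv b .ff) (a : LTL Ap) :
    propEquiv (.conj a b) .ff := by
  intro v
  simp only [propEval] at *
  exact ⟨fun hc => (h v).mp hc.2, False.elim⟩

lemma equivff_disj {a b : LTL Ap} (ha : propEquiv a .ff) (hb : propEquiv b .ff) :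
    propEquiv (.disj a b) .ff := by
  intro v
  simp only [propEval] at *
  exact ⟨fun hc => hc.elim (ha v).mp (hb v).mp, False.elim⟩

lemma equivff_afLetter {ξ : LTL Ap} (h : propEquiv ξ .ff) (ν : Finset Ap) :
    propEquiv (afLetter ξ ν) .ff := by
  intro v
  constructor
  · intro hv
    exact (h (fun χ => propEval v (afLetter χ ν))).mp ((propEval_afLetter v ν ξ).mp hv)
  · exact False.elim

lemma equivff_af {ξ : LTL Ap} (h : propEquiv ξ .ff) (u : List (Finset Ap)) :
    propEquiv (af ξ u) .ff := by
  induction u generalizing ξ with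
  | nil => exact h
  | cons a u ih => exact ih (equivff_afLetter h a)

lemma propEval_sat (w : ℕ → Finset Ap) :
    ∀ ξ : LTL Ap, propEval (fun χ => Sat w χ) ξ ↔ Sat w ξ := by
  intro ξ
  induction ξ with
  | conj φ ψ ihφ ihψ => simp only [propEval, Sat]; exact and_congr ihφ ihψ
  | disj φ ψ ihφ ihψ => simp only [propEval, Sat]; exact or_congr ihφ ihψ
  | tt => simp [propEval, Sat]
  | ff => simp [propEval, Sat]
  | _ => exact Iff.rfl

lemma not_equivff_of_sat {w : ℕ → Finset Ap} {ξ : LTL Ap} (h : Sat w ξ) :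
    ¬ propEquiv ξ .ff := by
  intro he
  exact (he (fun χ => Sat w χ)).mp ((propEval_sat w ξ).mpr h)

lemma suffix_suffix (w : ℕ → Finset Ap) (i j : ℕ) :
    suffix (suffix w i) j = suffix w (i + j) := by
  funext k; simp [suffix, Nat.add_assoc]

lemma suffix_zero (w : ℕ → Finset Ap) : suffix w 0 = w := by
  funext k; simp [suffix]

lemma sat_afLetter {w : ℕ → Finset Ap} :
    ∀ {ξ : LTL Ap}, Sat w ξ → Sat (suffix w 1) (afLetter ξ (w 0)) := by
  intro ξ
  induction ξ with
  | tt => intro _; trivial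
  | ff => intro h; exact h.elim
  | atom a =>
    intro h
    have h' : a ∈ w 0 := h
    simp only [afLetter, if_pos h']; trivial
  | natom a =>
    intro h
    have h' : a ∉ w 0 := h
    simp only [afLetter, if_neg h']; trivial
  | conj φ ψ ihφ ihψ => intro h; exact ⟨ihφ h.1, ihψ h.2⟩
  | disj φ ψ ihφ ihψ => intro h; exact h.elim (fun h => Or.inl (ihφ h)) (fun h => Or.inr (ihψ h))
  | next φ _ => intro h; exact h
  | fut φ ihφ =>
    rintro ⟨k, hk⟩
    cases k with
    | zero => exact Or.inl (ihφ (by rwa [suffix_zero] at hk))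
    | succ k =>
      refine Or.inr ⟨k, ?_⟩
      rw [suffix_suffix]; rw [show (1 + k) = k + 1 from Nat.add_comm 1 k]; exact hk
  | glob φ ihφ =>
    intro h
    refine ⟨ihφ (by simpa [suffix_zero] using h 0), fun k => ?_⟩
    rw [suffix_suffix, Nat.add_comm]; exact h (k + 1)
  | untl φ ψ ihφ ihψ =>
    rintro ⟨k, hk, hj⟩
    cases k with
    | zero => exact Or.inl (ihψ (by rwa [suffix_zero] at hk))
    | succ k =>
      refine Or.inr ⟨ihφ (by simpa [suffix_zero] using hj 0 (Nat.succ_pos k)), k, ?_, ?_⟩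
      · rw [suffix_suffix, Nat.add_comm]; exact hk
      · intro j hj'
        rw [suffix_suffix, Nat.add_comm]
        exact hj (j + 1) (Nat.succ_lt_succ hj')
  | wUntl φ ψ ihφ ihψ =>
    rintro (h | ⟨k, hk, hj⟩)
    · refine Or.inr ⟨ihφ (by simpa [suffix_zero] using h 0), Or.inl fun k => ?_⟩
      rw [suffix_suffix, Nat.add_comm]; exact h (k + 1)
    · cases k with
      | zero => exact Or.inl (ihψ (by rwa [suffix_zero] at hk))
      | succ k =>
        refine Or.inr ⟨ihφ (by simpa [suffix_zero] using hj 0 (Nat.succ_pos k)),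
          Or.inr ⟨k, ?_, ?_⟩⟩
        · rw [suffix_suffix, Nat.add_comm]; exact hk
        · intro j hj'
          rw [suffix_suffix, Nat.add_comm]
          exact hj (j + 1) (Nat.succ_lt_succ hj')
  | strongRel φ ψ ihφ ihψ =>
    rintro ⟨k, hk, hj⟩
    cases k with
    | zero =>
      exact ⟨ihψ (by simpa [suffix_zero] using hj 0 (Nat.le_refl 0)),
        Or.inl (ihφ (by rwa [suffix_zero] at hk))⟩
    | succ k =>
      refine ⟨ihψ (by simpa [suffix_zero] using hj 0 (Nat.zero_le _)),
        Or.inr ⟨k, ?_, ?_⟩⟩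
      · rw [suffix_suffix, Nat.add_comm]; exact hk
      · intro j hj'
        rw [suffix_suffix, Nat.add_comm]
        exact hj (j + 1) (Nat.succ_le_succ hj')
  | rel φ ψ ihφ ihψ =>
    rintro (h | ⟨k, hk, hj⟩)
    · refine ⟨ihψ (by simpa [suffix_zero] using h 0), Or.inr (Or.inl fun k => ?_)⟩
      rw [suffix_suffix, Nat.add_comm]; exact h (k + 1)
    · cases k with
      | zero =>
        exact ⟨ihψ (by simpa [suffix_zero] using hj 0 (Nat.le_refl 0)),
          Or.inl (ihφ (by rwa [suffix_zero] at hk))⟩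
      | succ k =>
        refine ⟨ihψ (by simpa [suffix_zero] using hj 0 (Nat.zero_le _)),
          Or.inr (Or.inr ⟨k, ?_, ?_⟩)⟩
        · rw [suffix_suffix, Nat.add_comm]; exact hk
        · intro j hj'
          rw [suffix_suffix, Nat.add_comm]
          exact hj (j + 1) (Nat.succ_le_succ hj')

lemma prefixWord_succ_right (w : ℕ → Finset Ap) (n : ℕ) :
    prefixWord w (n + 1) = prefixWord w n ++ [w n] := by
  simp [prefixWord, List.range_succ]

lemma prefixWord_succ (w : ℕ → Finset Ap) (n : ℕ) :
    prefixWord w (n + 1) = w 0 :: prefixWord (suffix w 1) n := by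
  simp only [prefixWord, List.range_succ_eq_map, List.map_cons, List.map_map]
  congr 1
  apply List.map_congr_left
  intro k _
  simp [suffix, Function.comp, Nat.add_comm]

lemma prefixWord_add (w : ℕ → Finset Ap) (m n : ℕ) :
    prefixWord w (m + n) = prefixWord w m ++ prefixWord (suffix w m) n := by
  simp only [prefixWord, List.range_add, List.map_append, List.map_map]
  congr 1

lemma sat_af_prefix {w : ℕ → Finset Ap} {ξ : LTL Ap} (h : Sat w ξ) (n : ℕ) :
    Sat (suffix w n) (af ξ (prefixWord w n)) := by
  induction n with
  | zero => rw [suffix_zero]; exact h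
  | succ n ih =>
    rw [prefixWord_succ_right, af_append]
    have h1 : Sat (suffix (suffix w n) 1) (afLetter (af ξ (prefixWord w n)) ((suffix w n) 0)) :=
      sat_afLetter ih
    rw [suffix_suffix] at h1
    have : (suffix w n) 0 = w n := by simp [suffix]
    rw [this] at h1
    simpa [af] using h1

lemma equivff_prefix_mono {w : ℕ → Finset Ap} {ξ : LTL Ap} {i : ℕ}
    (h : propEquiv (af ξ (prefixWord w i)) .ff) {j : ℕ} (hij : i ≤ j) :
    propEquiv (af ξ (prefixWord w j)) .ff := by
  obtain ⟨d, rfl⟩ := Nat.exists_eq_add_of_le hij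
  rw [prefixWord_add, af_append]
  exact equivff_af h _

lemma drop_prefixWord (m : ℕ) :
    ∀ (j : ℕ) (w : ℕ → Finset Ap), m ≤ j →
      (prefixWord w j).drop m = prefixWord (suffix w m) (j - m) := by
  induction m with
  | zero =>
    intro j w _
    simp [suffix_zero]
  | succ m ih =>
    intro j w hmj
    obtain ⟨j', rfl⟩ : ∃ j', j = j' + 1 := ⟨j - 1, by omega⟩
    rw [prefixWord_succ, List.drop_succ_cons, ih j' (suffix w 1) (by omega)]
    rw [suffix_suffix, Nat.add_comm 1 m, Nat.succ_sub_succ]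

lemma equivff_glob {φ : LTL Ap} :
    ∀ (u : List (Finset Ap)) (m : ℕ), m < u.length →
      propEquiv (af φ (u.drop m)) .ff → propEquiv (af (.glob φ) u) .ff := by
  intro u
  induction u with
  | nil => intro m hm; exact absurd hm (by simp)
  | cons a u ih =>
    intro m hm hff
    have : af (LTL.glob φ) (a :: u) = .conj (af (afLetter φ a) u) (af (.glob φ) u) := by
      simp [af, afLetter, af_conj]
    rw [this]
    cases m with
    | zero =>
      exact equivff_conj_left (by simpa [af] using hff) _
    | succ m =>
      exact equivff_conj_right (ih m (by simpa using hm) (by simpa using hff)) _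

lemma equivff_wUntl {φ ψ : LTL Ap} :
    ∀ (u : List (Finset Ap)) (k : ℕ), k < u.length →
      (∀ m ≤ k, propEquiv (af ψ (u.drop m)) .ff) →
      propEquiv (af φ (u.drop k)) .ff →
      propEquiv (af (.wUntl φ ψ) u) .ff := by
  intro u
  induction u with
  | nil => intro k hk; exact absurd hk (by simp)
  | cons a u ih =>
    intro k hk hψ hφ
    have : af (LTL.wUntl φ ψ) (a :: u) =
        .disj (af (afLetter ψ a) u) (.conj (af (afLetter φ a) u) (af (.wUntl φ ψ) u)) := by
      simp [af, afLetter, af_disj, af_conj]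
    rw [this]
    cases k with
    | zero =>
      refine equivff_disj (by simpa [af] using hψ 0 (Nat.le_refl 0)) ?_
      exact equivff_conj_left (by simpa [af] using hφ) _
    | succ k =>
      refine equivff_disj (by simpa [af] using hψ 0 (Nat.zero_le _)) ?_
      refine equivff_conj_right (ih k (by simpa using hk) ?_ (by simpa using hφ)) _
      intro m hm
      simpa using hψ (m + 1) (Nat.succ_le_succ hm)

lemma equivff_rel {φ ψ : LTL Ap} :
    ∀ (u : List (Finset Ap)) (k : ℕ), k < u.length →
      (∀ m < k, propEquiv (af φ (u.drop m)) .ff) →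
      propEquiv (af ψ (u.drop k)) .ff →
      propEquiv (af (.rel φ ψ) u) .ff := by
  intro u
  induction u with
  | nil => intro k hk; exact absurd hk (by simp)
  | cons a u ih =>
    intro k hk hφ hψ
    have : af (LTL.rel φ ψ) (a :: u) =
        .conj (af (afLetter ψ a) u) (.disj (af (afLetter φ a) u) (af (.rel φ ψ) u)) := by
      simp [af, afLetter, af_disj, af_conj]
    rw [this]
    cases k with
    | zero =>
      exact equivff_conj_left (by simpa [af] using hψ) _
    | succ k =>
      refine equivff_conj_right (equivff_disj (by simpa [af] using hφ 0 (Nat.succ_pos k)) ?_) _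
      refine ih k (by simpa using hk) ?_ (by simpa using hψ)
      intro m hm
      simpa using hφ (m + 1) (Nat.succ_lt_succ hm)

lemma length_prefixWord (w : ℕ → Finset Ap) (n : ℕ) : (prefixWord w n).length = n := by
  simp [prefixWord, List.range_succ]

lemma infixWord_eq (w : ℕ → Finset Ap) (i j : ℕ) :
    infixWord w i j = prefixWord (suffix w i) (j - i) := rfl

lemma safety : ∀ ξ : LTL Ap, inNuLTL ξ → ∀ w : ℕ → Finset Ap, ¬ Sat w ξ →
    ∃ i, propEquiv (af ξ (prefixWord w i)) .ff := by
  intro ξ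
  induction ξ with
  | tt => intro _ w h; exact absurd trivial h
  | ff => intro _ w _; exact ⟨0, fun v => Iff.rfl⟩
  | atom a =>
    intro _ w h
    have h' : a ∉ w 0 := h
    refine ⟨1, ?_⟩
    have : prefixWord w 1 = [w 0] := by simp [prefixWord, List.range_succ]
    rw [this]
    show propEquiv (if a ∈ w 0 then LTL.tt else LTL.ff) .ff
    rw [if_neg h']
    exact fun v => Iff.rfl
  | natom a =>
    intro _ w h
    have h' : a ∈ w 0 := by
      by_contra hc
      exact h hc
    refine ⟨1, ?_⟩
    have : prefixWord w 1 = [w 0] := by simp [prefixWord, List.range_succ]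
    rw [this]
    show propEquiv (if a ∈ w 0 then LTL.ff else LTL.tt) .ff
    rw [if_pos h']
    exact fun v => Iff.rfl
  | conj φ ψ ihφ ihψ =>
    intro hν w h
    by_cases hφ : Sat w φ
    · have hψ' : ¬ Sat w ψ := fun hs => h ⟨hφ, hs⟩
      obtain ⟨i, hi⟩ := ihψ hν.2 w hψ'
      exact ⟨i, by rw [af_conj]; exact equivff_conj_right hi _⟩
    · obtain ⟨i, hi⟩ := ihφ hν.1 w hφ
      exact ⟨i, by rw [af_conj]; exact equivff_conj_left hi _⟩
  | disj φ ψ ihφ ihψ =>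
    intro hν w h
    have hφ : ¬ Sat w φ := fun hs => h (Or.inl hs)
    have hψ : ¬ Sat w ψ := fun hs => h (Or.inr hs)
    obtain ⟨i₁, hi₁⟩ := ihφ hν.1 w hφ
    obtain ⟨i₂, hi₂⟩ := ihψ hν.2 w hψ
    refine ⟨max i₁ i₂, ?_⟩
    rw [af_disj]
    exact equivff_disj (equivff_prefix_mono hi₁ (Nat.le_max_left _ _))
      (equivff_prefix_mono hi₂ (Nat.le_max_right _ _))
  | next φ ihφ =>
    intro hν w h
    obtain ⟨i, hi⟩ := ihφ hν (suffix w 1) h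
    refine ⟨i + 1, ?_⟩
    rw [prefixWord_succ]
    exact hi
  | glob φ ihφ =>
    intro hν w h
    have hex : ∃ k, ¬ Sat (suffix w k) φ := by
      by_contra hc
      push_neg at hc
      exact h hc
    obtain ⟨k, hk⟩ := hex
    obtain ⟨l, hl⟩ := ihφ hν (suffix w k) hk
    have hl' : propEquiv (af φ (prefixWord (suffix w k) (l + 1))) .ff := by
      rw [prefixWord_succ_right, af_append]
      exact equivff_af hl _
    refine ⟨k + (l + 1), ?_⟩
    refine equivff_glob (prefixWord w (k + (l + 1))) k ?_ ?_
    · rw [length_prefixWord]; omega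
    · rw [drop_prefixWord k (k + (l + 1)) w (by omega)]
      have : k + (l + 1) - k = l + 1 := by omega
      rw [this]
      exact hl'
  | wUntl φ ψ ihφ ihψ =>
    intro hν w h
    classical
    have hA : ¬ ∀ k, Sat (suffix w k) φ := fun hc => h (Or.inl hc)
    have hB : ¬ ∃ k, Sat (suffix w k) ψ ∧ ∀ j < k, Sat (suffix w j) φ :=
      fun hc => h (Or.inr hc)
    have hex : ∃ k, ¬ Sat (suffix w k) φ := by
      by_contra hc
      push_neg at hc
      exact hA hc
    set k := Nat.find hex with hkdef
    have hkφ : ¬ Sat (suffix w k) φ := Nat.find_spec hex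
    have hkmin : ∀ j < k, Sat (suffix w j) φ := by
      intro j hj
      by_contra hc
      exact absurd hj (Nat.not_lt.mpr (Nat.find_le hc))
    have hψall : ∀ m ≤ k, ¬ Sat (suffix w m) ψ := by
      intro m hm hs
      exact hB ⟨m, hs, fun j hj => hkmin j (Nat.lt_of_lt_of_le hj hm)⟩
    have H : ∀ m, m ≤ k → ∃ i, propEquiv (af ψ (prefixWord (suffix w m) i)) .ff :=
      fun m hm => ihψ hν.2 _ (hψall m hm)
    choose f hf using H
    obtain ⟨iφ, hiφ⟩ := ihφ hν.1 _ hkφ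
    set S := (Finset.range (k + 1)).sup (fun m => if h : m ≤ k then f m h else 0) with hSdef
    have hfS : ∀ m (hm : m ≤ k), f m hm ≤ S := by
      intro m hm
      have := Finset.le_sup (f := fun m => if h : m ≤ k then f m h else 0)
        (Finset.mem_range.mpr (Nat.lt_succ_of_le hm))
      simpa [dif_pos hm] using this
    set j := k + 1 + iφ + S with hjdef
    refine ⟨j, ?_⟩
    refine equivff_wUntl (prefixWord w j) k ?_ ?_ ?_
    · rw [length_prefixWord]; omega
    · intro m hm
      rw [drop_prefixWord m j w (by omega)]
      exact equivff_prefix_mono (hf m hm) (by have := hfS m hm; omega)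
    · rw [drop_prefixWord k j w (by omega)]
      exact equivff_prefix_mono hiφ (by omega)
  | rel φ ψ ihφ ihψ =>
    intro hν w h
    classical
    have hA : ¬ ∀ k, Sat (suffix w k) ψ := fun hc => h (Or.inl hc)
    have hB : ¬ ∃ k, Sat (suffix w k) φ ∧ ∀ j ≤ k, Sat (suffix w j) ψ :=
      fun hc => h (Or.inr hc)
    have hex : ∃ k, ¬ Sat (suffix w k) ψ := by
      by_contra hc
      push_neg at hc
      exact hA hc
    set k := Nat.find hex with hkdef
    have hkψ : ¬ Sat (suffix w k) ψ := Nat.find_spec hex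
    have hkmin : ∀ j < k, Sat (suffix w j) ψ := by
      intro j hj
      by_contra hc
      exact absurd hj (Nat.not_lt.mpr (Nat.find_le hc))
    have hφall : ∀ m < k, ¬ Sat (suffix w m) φ := by
      intro m hm hs
      exact hB ⟨m, hs, fun j hj => hkmin j (Nat.lt_of_le_of_lt hj hm)⟩
    have H : ∀ m, m < k → ∃ i, propEquiv (af φ (prefixWord (suffix w m) i)) .ff :=
      fun m hm => ihφ hν.1 _ (hφall m hm)
    choose f hf using H
    obtain ⟨iψ, hiψ⟩ := ihψ hν.2 _ hkψ
    set S := (Finset.range k).sup (fun m => if h : m < k then f m h else 0) with hSdef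
    have hfS : ∀ m (hm : m < k), f m hm ≤ S := by
      intro m hm
      have := Finset.le_sup (f := fun m => if h : m < k then f m h else 0)
        (Finset.mem_range.mpr hm)
      simpa [dif_pos hm] using this
    set j := k + 1 + iψ + S with hjdef
    refine ⟨j, ?_⟩
    refine equivff_rel (prefixWord w j) k ?_ ?_ ?_
    · rw [length_prefixWord]; omega
    · intro m hm
      rw [drop_prefixWord m j w (by omega)]
      exact equivff_prefix_mono (hf m hm) (by have := hfS m hm; omega)
    · rw [drop_prefixWord k j w (by omega)]
      exact equivff_prefix_mono hiψ (by omega)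
  | fut φ _ => intro hν; exact hν.elim
  | untl φ ψ _ _ => intro hν; exact hν.elim
  | strongRel φ ψ _ _ => intro hν; exact hν.elim

end Stmt6Aux
/-- for `φ ∈ νLTL`, `w ⊨ FGφ` iff there is `i` such that for all
`j ≥ i`, `af(Gφ, w_{ij}) ≢_P ff`. -/
theorem stmt6 {Ap : Type} [DecidableEq Ap] [Fintype Ap]
    (φ : LTL Ap) (hφ : inNuLTL φ) (w : ℕ → Finset Ap) :
    Sat w (LTL.fut (LTL.glob φ)) ↔
      ∃ i : ℕ, ∀ j : ℕ, i ≤ j → ¬ propEquiv (af (LTL.glob φ) (infixWord w i j)) LTL.ff := by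
  constructor
  · rintro ⟨i, hi⟩
    refine ⟨i, fun j hij => ?_⟩
    have hs := Stmt6Aux.sat_af_prefix hi (j - i)
    rw [Stmt6Aux.infixWord_eq]
    exact Stmt6Aux.not_equivff_of_sat hs
  · rintro ⟨i, hi⟩
    by_contra hns
    have hng : ¬ Sat (suffix w i) (LTL.glob φ) := fun hg => hns ⟨i, hg⟩
    obtain ⟨l, hl⟩ := Stmt6Aux.safety (LTL.glob φ) hφ (suffix w i) hng
    refine hi (i + l) (Nat.le_add_right _ _) ?_
    rw [Stmt6Aux.infixWord_eq, Nat.add_sub_cancel_left]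
    exact hl
end
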